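/- There exist a constant c > 0 and N₀ such that for all n ≥ N₀, the functions g_n(t) = ∑_{k=1}^n (1 − k/n)(1/k) sin(kt) and e_n(t) = e^{int} satisfy ‖e_n g_n‖_U ≥ c log n, where ‖h‖_U = sup_N ‖S_N(h)‖_∞. -/

import Mathlib

open Real Complex MeasureTheory Filter

/-- The `k`-th Fourier coefficient of a `2π`-periodic function `f : ℝ → ℂ`. -/
noncomputable def fc (f : ℝ → ℂ) (k : ℤ) : ℂ :=
  (1 / (2 * Real.pi)) * ∫ θ in (-Real.pi)..Real.pi, f θ * Complex.exp (-Complex.I * k * θ)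

/-- The `N`-th symmetric partial sum of the Fourier series of `f`. -/
noncomputable def pS (f : ℝ → ℂ) (N : ℕ) (t : ℝ) : ℂ :=
  ∑ k ∈ Finset.Icc (-(N : ℤ)) (N : ℤ), fc f k * Complex.exp (Complex.I * k * t)

/-- `g_n(t) = ∑_{k=1}^n (1 - k/n)(1/k) sin(kt)` viewed as a complex-valued function. -/
noncomputable def gFun (n : ℕ) (t : ℝ) : ℂ :=
  ∑ k ∈ Finset.Icc 1 n, (1 - (k : ℂ) / n) * (1 / k) * Real.sin (k * t)

/-- `e_n(t) = e^{int}`. -/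
noncomputable def eFun (n : ℕ) (t : ℝ) : ℂ := Complex.exp (Complex.I * n * t)

/-!
Multiplying by `e_n` moves the spectrum `{±1, …, ±n}` of `g_n` to `{0, …, 2n} \ {n}`, so the
partial sum `S_n` keeps, of each `sin (k t) = (e^{ikt} - e^{-ikt}) / (2i)`, exactly the term of
frequency `n - k`. At `t = 0` this gives `S_n(e_n g_n)(0) = (i/2) ∑_{k ≤ n} (1 - k/n)/k
= (i/2) (H_n - 1)`, and `H_n ≥ log n`.
-/

open Finset

theorem integral_exp_I_int_mul (m : ℤ) :
    ∫ θ in -π..π, exp (I * m * θ) = if m = 0 then (2 * π : ℂ) else 0 := by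
  split_ifs with hm
  · simp [hm, two_mul]
  have hIm : I * m ≠ 0 := mul_ne_zero I_ne_zero (Int.cast_ne_zero.mpr hm)
  have hperiodic : exp (I * m * π) = exp (I * m * (-π : ℝ)) := by
    rw [show I * m * π = I * m * (-π : ℝ) + m * (2 * π * I) by push_cast; ring,
      Complex.exp_add, exp_int_mul_two_pi_mul_I, mul_one]
  rw [integral_exp_mul_complex hIm, hperiodic, sub_self, zero_div]

theorem fc_exp_I_int_mul (p m : ℤ) :
    fc (fun θ => exp (I * p * θ)) m = if p = m then 1 else 0 := by
  have hprod (θ : ℝ) : exp (I * p * θ) * exp (-I * m * θ) = exp (I * ((p - m : ℤ) : ℂ) * θ) := by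
    rw [← Complex.exp_add]; congr 1; push_cast; ring
  simp only [fc, hprod, integral_exp_I_int_mul, sub_eq_zero]
  split_ifs
  · field_simp
  · simp

theorem fc_add {f g : ℝ → ℂ} (hf : IntervalIntegrable f volume (-π) π)
    (hg : IntervalIntegrable g volume (-π) π) (m : ℤ) :
    fc (fun θ => f θ + g θ) m = fc f m + fc g m := by
  have hexp : ContinuousOn (fun θ : ℝ => exp (-I * m * θ)) (Set.uIcc (-π) π) := by fun_prop
  simp only [fc, add_mul]
  rw [intervalIntegral.integral_add (hf.mul_continuousOn hexp) (hg.mul_continuousOn hexp), mul_add]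

theorem pS_add {f g : ℝ → ℂ} (hf : IntervalIntegrable f volume (-π) π)
    (hg : IntervalIntegrable g volume (-π) π) (N : ℕ) (t : ℝ) :
    pS (fun θ => f θ + g θ) N t = pS f N t + pS g N t := by
  simp only [pS, fc_add hf hg, add_mul, sum_add_distrib]

theorem fc_finset_sum_mul {ι : Type*} (s : Finset ι) (a : ι → ℂ) (F : ι → ℝ → ℂ)
    (hF : ∀ j ∈ s, IntervalIntegrable (F j) volume (-π) π) (m : ℤ) :
    fc (fun θ => ∑ j ∈ s, a j * F j θ) m = ∑ j ∈ s, a j * fc (F j) m := by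
  have hsplit (θ : ℝ) : (∑ j ∈ s, a j * F j θ) * exp (-I * m * θ) =
      ∑ j ∈ s, a j * (F j θ * exp (-I * m * θ)) := by
    simp only [sum_mul, mul_assoc]
  simp only [fc, hsplit]
  rw [intervalIntegral.integral_finsetSum (f := fun j θ => a j * (F j θ * exp (-I * m * θ)))
    fun j hj => ((hF j hj).mul_continuousOn (by fun_prop)).const_mul _]
  simp only [intervalIntegral.integral_const_mul, mul_sum]
  exact sum_congr rfl fun j _ => by ring

theorem pS_finset_sum_exp {ι : Type*} (s : Finset ι) (a : ι → ℂ) (φ : ι → ℤ) (N : ℕ) (t : ℝ) :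
    pS (fun θ => ∑ j ∈ s, a j * exp (I * φ j * θ)) N t =
      ∑ j ∈ s, if φ j ∈ Icc (-(N : ℤ)) N then a j * exp (I * φ j * t) else 0 := by
  rw [pS]
  simp only [fc_finset_sum_mul s a (fun j θ => exp (I * φ j * θ))
    fun j _ => Continuous.intervalIntegrable (by fun_prop) _ _, fc_exp_I_int_mul, sum_mul]
  rw [sum_comm]
  refine sum_congr rfl fun j _ => ?_
  simp only [mul_ite, mul_one, mul_zero, ite_mul, zero_mul]
  rw [sum_ite_eq]

theorem exp_I_mul_mul_sin (z w : ℂ) :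
    exp (I * z) * Complex.sin w = I / 2 * (exp (I * (z - w)) - exp (I * (z + w))) := by
  rw [Complex.sin, show I * (z - w) = I * z + -w * I by ring,
    show I * (z + w) = I * z + w * I by ring, Complex.exp_add, Complex.exp_add]
  ring

theorem eFun_mul_gFun (n : ℕ) (θ : ℝ) :
    eFun n θ * gFun n θ =
      (∑ k ∈ Icc 1 n, I / 2 * ((1 - (k : ℂ) / n) * (1 / k)) * exp (I * ((n - k : ℤ) : ℂ) * θ)) +
        ∑ k ∈ Icc 1 n, -(I / 2 * ((1 - (k : ℂ) / n) * (1 / k))) * exp (I * ((n + k : ℤ) : ℂ) * θ) := by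
  rw [← sum_add_distrib, eFun, gFun, mul_sum]
  refine sum_congr rfl fun k _ => ?_
  rw [mul_left_comm, show I * n * θ = I * (n * θ) by ring, ofReal_sin, exp_I_mul_mul_sin]
  push_cast
  ring_nf

theorem pS_eFun_mul_gFun_self_zero (n : ℕ) :
    pS (fun θ => eFun n θ * gFun n θ) n 0 = I / 2 * ∑ k ∈ Icc 1 n, (1 - (k : ℂ) / n) * (1 / k) := by
  have htrig (a : ℕ → ℂ) (φ : ℕ → ℤ) : IntervalIntegrable
      (fun θ : ℝ => ∑ k ∈ Icc 1 n, a k * exp (I * φ k * θ)) volume (-π) π :=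
    Continuous.intervalIntegrable (by fun_prop) _ _
  rw [funext (eFun_mul_gFun n), pS_add (htrig _ _) (htrig _ _), pS_finset_sum_exp,
    pS_finset_sum_exp]
  have hlow (k : ℕ) (hk : k ∈ Icc 1 n) : (n : ℤ) - k ∈ Icc (-(n : ℤ)) n := by
    simp only [mem_Icc] at hk ⊢; omega
  have hhigh (k : ℕ) (hk : k ∈ Icc 1 n) : (n : ℤ) + k ∉ Icc (-(n : ℤ)) n := by
    simp only [mem_Icc] at hk ⊢; omega
  rw [sum_congr rfl fun k hk => if_pos (hlow k hk), sum_congr rfl fun k hk => if_neg (hhigh k hk),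
    sum_const_zero, add_zero, mul_sum]
  simp

theorem sum_Icc_one_sub_div_mul_one_div {K : Type*} [Field K] [CharZero K] {n : ℕ} (hn : 1 ≤ n) :
    ∑ k ∈ Icc 1 n, (1 - (k : K) / n) * (1 / k) = harmonic n - 1 := by
  have hterm (k : ℕ) (hk : k ∈ Icc 1 n) : (1 - (k : K) / n) * (1 / k) = (k : K)⁻¹ - 1 / n := by
    have : (k : K) ≠ 0 := Nat.cast_ne_zero.mpr (by simp at hk; omega)
    field_simp
  have hn0 : (n : K) ≠ 0 := Nat.cast_ne_zero.mpr (by omega)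
  rw [sum_congr rfl hterm, sum_sub_distrib, harmonic_eq_sum_Icc]
  simp [hn0]

theorem half_log_le_harmonic_sub_one {n : ℕ} (hn : 8 ≤ n) :
    Real.log n / 2 ≤ (harmonic n : ℝ) - 1 := by
  have hlog_le : Real.log n ≤ harmonic n := calc
    Real.log n ≤ Real.log ↑(n + 1) := log_le_log (by positivity) (by norm_cast; omega)
    _ ≤ harmonic n := log_add_one_le_harmonic n
  have htwo_le : 2 ≤ Real.log n := calc
    (2 : ℝ) ≤ 3 * Real.log 2 := by linarith [log_two_gt_d9]
    _ = Real.log 8 := by rw [← log_rpow two_pos]; norm_num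
    _ ≤ Real.log n := log_le_log (by norm_num) (by exact_mod_cast hn)
  linarith

/-- `‖e_n g_n‖_{U(𝕋)} ≳ log n`: some symmetric partial sum of `e_n g_n` is
at least `c log n` in absolute value at some point. -/
theorem U_norm_lower_bound :
    ∃ c : ℝ, 0 < c ∧ ∃ N₀ : ℕ, ∀ n : ℕ, N₀ ≤ n →
      ∃ (N : ℕ) (t : ℝ),
        c * Real.log n ≤ ‖pS (fun θ => eFun n θ * gFun n θ) N t‖ := by
  refine ⟨1 / 4, by norm_num, 8, fun n hn => ⟨n, 0, ?_⟩⟩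
  have hbound := half_log_le_harmonic_sub_one hn
  have hlog : 0 ≤ Real.log n := log_nonneg (by exact_mod_cast (by omega : 1 ≤ n))
  have hH : ((harmonic n : ℚ) : ℂ) - 1 = (((harmonic n : ℝ) - 1 : ℝ) : ℂ) := by push_cast; rfl
  rw [pS_eFun_mul_gFun_self_zero, sum_Icc_one_sub_div_mul_one_div (by omega), hH, norm_mul,
    norm_div, norm_I, Complex.norm_two, norm_real, Real.norm_of_nonneg (by linarith)]
  linarith
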